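/- Let ρ ∈ 𝒮(ℝ) with \hat{ρ} compactly supported, supp \hat{ρ} not containing 0, and ρ(0) = 1. Then τ(s) := (1 − ρ(s))/(i s) extends to a smooth function on ℝ, its Fourier transform \hat{τ}(r) = ∫_{−∞}^r \hat{ρ}(σ) dσ − 2π 𝟙_{r ≥ 0} is compactly supported, and |\hat{τ}| is bounded. -/

import Mathlib

open MeasureTheory Complex Real
open scoped ENNReal

noncomputable section

/-- Fourier transform with the convention `ĥ(ξ) = ∫ e^{−i s ξ} h(s) ds`. -/
def fhat (h : ℝ → ℂ) (ξ : ℝ) : ℂ :=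
  ∫ s : ℝ, Complex.exp (-(Complex.I * s * ξ)) * h s

open scoped FourierTransform

lemma fhat_eq_fourier (f : ℝ → ℂ) (ξ : ℝ) :
    fhat f ξ = 𝓕 f (ξ / (2 * π)) := by
  rw [Real.fourier_real_eq_integral_exp_smul]
  unfold fhat
  congr 1
  funext s
  rw [smul_eq_mul]
  have h1 : (-2 * π * s * (ξ / (2 * π)) : ℝ) = -(s * ξ) := by
    field_simp
  rw [h1]
  congr 1
  push_cast
  ring

lemma fhat_schwartz_continuous (f : SchwartzMap ℝ ℂ) : Continuous (fhat fun x => f x) := by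
  have h : (fhat fun x => f x) = fun ξ => 𝓕 (fun x => f x) (ξ / (2 * π)) :=
    funext fun ξ => fhat_eq_fourier _ _
  rw [h, ← SchwartzMap.fourier_coe]
  exact (𝓕 f).continuous.comp (continuous_id.div_const _)

lemma fhat_schwartz_integrable (f : SchwartzMap ℝ ℂ) : Integrable (fhat fun x => f x) := by
  have h : (fhat fun x => f x) = fun ξ => 𝓕 (fun x => f x) (ξ / (2 * π)) :=
    funext fun ξ => fhat_eq_fourier _ _
  rw [h, ← SchwartzMap.fourier_coe]
  exact ((𝓕 f).integrable).comp_div (by positivity)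

lemma integral_exp_fhat (f : SchwartzMap ℝ ℂ) (r : ℝ) :
    (∫ x : ℝ, Complex.exp (Complex.I * x * r) * fhat (fun u => f u) x) = 2 * π * f r := by
  have hπ : (0:ℝ) < 2 * π := by positivity
  have hπc : ((π:ℂ)) ≠ 0 := by exact_mod_cast Real.pi_ne_zero
  have h1 : (∫ x : ℝ, Complex.exp (Complex.I * x * r) * fhat (fun u => f u) x)
      = ∫ x : ℝ, (fun u : ℝ => Complex.exp (Complex.I * (2 * π * u) * r) * 𝓕 (fun y => f y)  u)
          (x * (2 * π)⁻¹) := by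
    congr 1
    funext x
    simp only
    rw [fhat_eq_fourier, div_eq_mul_inv]
    have h2 : Complex.I * (2 * (π:ℂ) * ((x * (2 * π)⁻¹ : ℝ) : ℂ)) * (r:ℂ)
        = Complex.I * (x:ℂ) * (r:ℂ) := by
      push_cast
      field_simp
    rw [h2]
  rw [h1, MeasureTheory.Measure.integral_comp_mul_right
    (fun u : ℝ => Complex.exp (Complex.I * (2 * π * u) * r) * 𝓕 (fun y : ℝ => f y) u)
    ((2 * π)⁻¹), inv_inv, abs_of_pos hπ]
  have hint : Integrable (𝓕 (fun x : ℝ => f x)) := by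
    rw [← SchwartzMap.fourier_coe]
    exact (𝓕 f).integrable
  have hinv : 𝓕⁻ (𝓕 (fun x : ℝ => f x)) = fun x : ℝ => f x :=
    Continuous.fourierInv_fourier_eq f.continuous f.integrable hint
  have h4 : (∫ u : ℝ, Complex.exp (Complex.I * (2 * π * u) * r) * 𝓕 (fun y : ℝ => f y) u)
      = f r := by
    have h5 : (∫ u : ℝ, Complex.exp (Complex.I * (2 * π * u) * r) * 𝓕 (fun y : ℝ => f y) u)
        = 𝓕 (𝓕 (fun y : ℝ => f y)) (-r) := by
      rw [Real.fourier_real_eq_integral_exp_smul]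
      congr 1
      funext u
      rw [smul_eq_mul]
      have h6 : ((-2 * π * u * -r : ℝ) : ℂ) * Complex.I
          = Complex.I * (2 * (π:ℂ) * (u:ℂ)) * (r:ℂ) := by
        push_cast
        ring
      rw [h6]
    rw [h5, ← Real.fourierInv_eq_fourier_neg, hinv]
  rw [h4, real_smul]
  push_cast
  ring

/-- If `ρ ∈ 𝒮(ℝ)` has `ρ̂` compactly supported away from `0` and
`ρ(0) = 1`, then `τ(s) = (1 − ρ(s))/(i s)` extends to a smooth function, whose
(distributional) Fourier transform is the function
`τ̂(r) = ∫_{−∞}^r ρ̂(σ) dσ − 2π 𝟙_{r ≥ 0}`, which is compactly supported and bounded. -/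
theorem smooth_tau_compact_fourier (ρ : SchwartzMap ℝ ℂ)
    (hcpt : HasCompactSupport (fhat (fun s => ρ s)))
    (h0 : 0 ∉ tsupport (fhat (fun s => ρ s)))
    (hρ0 : ρ 0 = 1) :
    ∃ τ : ℝ → ℂ, ContDiff ℝ (⊤ : ℕ∞) τ ∧
      (∀ s : ℝ, s ≠ 0 → τ s = (1 - ρ s) / (Complex.I * s)) ∧
      HasCompactSupport
        (fun r : ℝ => (∫ σ in Set.Iic r, fhat (fun s => ρ s) σ)
          - 2 * (π : ℂ) * (if 0 ≤ r then 1 else 0)) ∧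
      (∃ M : ℝ, ∀ r : ℝ,
        ‖(∫ σ in Set.Iic r, fhat (fun s => ρ s) σ)
          - 2 * (π : ℂ) * (if 0 ≤ r then 1 else 0)‖ ≤ M) ∧
      (∀ φ : SchwartzMap ℝ ℂ,
        (∫ s : ℝ, τ s * fhat (fun u => φ u) s)
          = ∫ r : ℝ, ((∫ σ in Set.Iic r, fhat (fun s => ρ s) σ)
              - 2 * (π : ℂ) * (if 0 ≤ r then 1 else 0)) * φ r) := by
  classical
  have hπc : ((π:ℂ)) ≠ 0 := by exact_mod_cast Real.pi_ne_zero
  have h2πc : (2 * (π:ℂ)) ≠ 0 := by simp [hπc]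
  set g : ℝ → ℂ := fhat (fun s => ρ s) with hgdef
  have hgcont : Continuous g := fhat_schwartz_continuous ρ
  have hgint : Integrable g := fhat_schwartz_integrable ρ
  obtain ⟨R₀, hR₀⟩ := hcpt.isBounded.subset_closedBall 0
  set R : ℝ := max R₀ 0 + 1 with hRdef
  have hR1 : (1:ℝ) ≤ R := by
    rw [hRdef]; have := le_max_right R₀ 0; linarith
  have hRpos : (0:ℝ) < R := lt_of_lt_of_le one_pos hR1
  have hg0 : ∀ σ : ℝ, R ≤ |σ| → g σ = 0 := by
    intro σ hσ
    apply image_eq_zero_of_notMem_tsupport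
    intro hmem
    have h1 := hR₀ hmem
    rw [Metric.mem_closedBall, Real.dist_eq, sub_zero] at h1
    have h2 : R₀ ≤ max R₀ 0 := le_max_left _ _
    rw [hRdef] at hσ
    linarith
  have htotal : (∫ σ : ℝ, g σ) = 2 * π := by
    have h := integral_exp_fhat ρ 0
    rw [hρ0] at h
    simpa using h
  set G : ℝ → ℂ := fun r => ∫ σ in Set.Iic r, g σ with hGdef
  have hG0 : ∀ r : ℝ, G r = G 0 + ∫ x in (0:ℝ)..r, g x := by
    intro r
    have h := intervalIntegral.integral_Iic_sub_Iic (hgint.integrableOn) (hgint.integrableOn)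
      (a := (0:ℝ)) (b := r)
    have h2 : G r - G 0 = ∫ x in (0:ℝ)..r, g x := h
    linear_combination h2
  have hGcont : Continuous G := by
    have h : G = fun r => G 0 + ∫ x in (0:ℝ)..r, g x := funext hG0
    rw [h]
    exact continuous_const.add
      (intervalIntegral.continuous_primitive (fun a b => hgint.intervalIntegrable) 0)
  have hGderiv : ∀ r : ℝ, HasDerivAt G (g r) r := by
    intro r
    have h1 : HasDerivAt (fun u : ℝ => ∫ x in (0:ℝ)..u, g x) (g r) r :=
      intervalIntegral.integral_hasDerivAt_right (hgint.intervalIntegrable)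
        (hgcont.stronglyMeasurableAtFilter _ _) hgcont.continuousAt
    have h2 := h1.const_add (G 0)
    exact h2.congr_of_eventuallyEq (Filter.Eventually.of_forall fun u => (hG0 u))
  have hGR : ∀ r : ℝ, R ≤ r → G r = 2 * π := by
    intro r hr
    show (∫ σ in Set.Iic r, g σ) = 2 * (π:ℂ)
    rw [← htotal]
    apply setIntegral_eq_integral_of_forall_compl_eq_zero
    intro x hx
    simp only [Set.mem_Iic, not_le] at hx
    have hxpos : 0 < x := lt_of_lt_of_le hRpos (le_trans hr (le_of_lt hx))
    exact hg0 x (by rw [abs_of_pos hxpos]; linarith)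
  have hGL : ∀ r : ℝ, r ≤ -R → G r = 0 := by
    intro r hr
    show (∫ σ in Set.Iic r, g σ) = 0
    apply setIntegral_eq_zero_of_forall_eq_zero
    intro x hx
    have hx' : x ≤ -R := le_trans hx hr
    exact hg0 x (by rw [abs_of_neg (by linarith)]; linarith)
  set F : ℝ → ℂ := fun r => G r - 2 * (π:ℂ) * (if 0 ≤ r then 1 else 0) with hFdef
  have hFsupp : ∀ r : ℝ, r ∉ Set.Icc (-R) R → F r = 0 := by
    intro r hr
    simp only [Set.mem_Icc, not_and_or, not_le] at hr
    rcases hr with hr | hr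
    · simp only [hFdef, hGL r (by linarith), if_neg (by linarith : ¬ (0:ℝ) ≤ r)]
      ring
    · simp only [hFdef, hGR r (by linarith), if_pos (by linarith : (0:ℝ) ≤ r)]
      ring
  have hFcpt : HasCompactSupport F := HasCompactSupport.intro isCompact_Icc hFsupp
  have hFm : Measurable F := by
    apply (hGcont.measurable).sub
    apply Measurable.const_mul
    exact Measurable.ite measurableSet_Ici measurable_const measurable_const
  set M : ℝ := (∫ σ : ℝ, ‖g σ‖) + 2 * π with hMdef
  have hFbd : ∀ r : ℝ, ‖F r‖ ≤ M := by
    intro r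
    simp only [hFdef]
    refine le_trans (norm_sub_le _ _) ?_
    have h1 : ‖G r‖ ≤ ∫ σ in Set.Iic r, ‖g σ‖ := norm_integral_le_integral_norm _
    have h2 : (∫ σ in Set.Iic r, ‖g σ‖) ≤ ∫ σ : ℝ, ‖g σ‖ :=
      setIntegral_le_integral hgint.norm (Filter.Eventually.of_forall fun x => norm_nonneg _)
    have h3 : ‖2 * (π:ℂ) * (if 0 ≤ r then 1 else 0)‖ ≤ 2 * π := by
      split_ifs with h
      · simp [_root_.abs_of_nonneg Real.pi_nonneg]
      · simp [Real.pi_nonneg]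
    rw [hMdef]
    have h4 : ‖G r‖ ≤ ∫ σ : ℝ, ‖g σ‖ := le_trans h1 h2
    linarith
  have hFint : Integrable F := by
    have hind : Integrable (Set.indicator (Set.Icc (-R) R) (fun _ => M) : ℝ → ℝ) := by
      rw [integrable_indicator_iff measurableSet_Icc]
      exact integrableOn_const measure_Icc_lt_top.ne
    refine Integrable.mono' hind hFm.aestronglyMeasurable ?_
    filter_upwards with r
    by_cases hr : r ∈ Set.Icc (-R) R
    · rw [Set.indicator_of_mem hr]; exact hFbd r
    · rw [Set.indicator_of_notMem hr, hFsupp r hr]; simp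
  have hexp_re : ∀ (z : ℂ) (r : ℝ), (Complex.I * z * r).re = -z.im * r := by
    intro z r
    simp only [Complex.mul_re, Complex.mul_im, Complex.I_re, Complex.I_im,
      Complex.ofReal_re, Complex.ofReal_im]
    ring
  have hexp_one : ∀ (s r : ℝ), ‖Complex.exp (Complex.I * s * r)‖ = 1 := by
    intro s r
    rw [Complex.norm_exp, hexp_re]
    simp
  have hexp_bound : ∀ (z : ℂ) (r : ℝ), |r| ≤ R →
      ‖Complex.exp (Complex.I * z * r)‖ ≤ Real.exp ((‖z‖ + 1) * R) := by
    intro z r hr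
    rw [Complex.norm_exp, hexp_re]
    apply Real.exp_le_exp.2
    calc -z.im * r ≤ |(-z.im) * r| := le_abs_self _
      _ = |z.im| * |r| := by rw [abs_mul, abs_neg]
      _ ≤ (‖z‖ + 1) * R := by
          apply mul_le_mul _ hr (abs_nonneg r) (by positivity)
          calc |z.im| ≤ ‖z‖ := Complex.abs_im_le_norm z
            _ ≤ ‖z‖ + 1 := by linarith
  have hsupp_abs : ∀ r : ℝ, F r ≠ 0 → |r| ≤ R := by
    intro r hr
    by_contra h
    exact hr (hFsupp r (by intro hmem; exact h (abs_le.mpr ⟨hmem.1, hmem.2⟩)))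
  set T : ℂ → ℂ := fun z => (2 * (π:ℂ))⁻¹ * ∫ r : ℝ, Complex.exp (Complex.I * z * r) * F r
    with hTdef
  have hKm : ∀ z : ℂ, AEStronglyMeasurable (fun r : ℝ => Complex.exp (Complex.I * z * r) * F r)
      volume := by
    intro z
    exact ((Complex.continuous_exp.comp
      (continuous_const.mul Complex.continuous_ofReal)).aestronglyMeasurable).mul
      hFm.aestronglyMeasurable
  have hKint : ∀ z : ℂ, Integrable (fun r : ℝ => Complex.exp (Complex.I * z * r) * F r) := by
    intro z
    refine Integrable.mono' ((hFint.norm).const_mul (Real.exp ((‖z‖ + 1) * R))) (hKm z) ?_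
    filter_upwards with r
    rw [norm_mul]
    by_cases hFr : F r = 0
    · rw [hFr]
      simp [Real.exp_nonneg]
    · exact mul_le_mul_of_nonneg_right (hexp_bound z r (hsupp_abs r hFr)) (norm_nonneg _)
  have hTdiff : Differentiable ℂ T := by
    intro z₀
    have hmeas' : AEStronglyMeasurable
        (fun r : ℝ => Complex.exp (Complex.I * z₀ * r) * (Complex.I * r) * F r) volume := by
      refine AEStronglyMeasurable.mul ?_ hFm.aestronglyMeasurable
      exact ((Complex.continuous_exp.comp
        (continuous_const.mul Complex.continuous_ofReal)).mul
        (continuous_const.mul Complex.continuous_ofReal)).aestronglyMeasurable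
    have hbound : ∀ᵐ r : ℝ ∂volume, ∀ z ∈ Metric.ball z₀ 1,
        ‖Complex.exp (Complex.I * z * r) * (Complex.I * r) * F r‖
          ≤ R * Real.exp ((‖z₀‖ + 1 + 1) * R) * ‖F r‖ := by
      filter_upwards with r
      intro z hz
      by_cases hFr : F r = 0
      · simp [hFr]
      · have hrR : |r| ≤ R := hsupp_abs r hFr
        have hz1 : ‖z‖ + 1 ≤ ‖z₀‖ + 1 + 1 := by
          have hd := mem_ball_iff_norm.mp hz
          have h2 : ‖z‖ ≤ ‖z₀‖ + 1 := by
            calc ‖z‖ = ‖z₀ + (z - z₀)‖ := by rw [show z₀ + (z - z₀) = z from by ring]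
              _ ≤ ‖z₀‖ + ‖z - z₀‖ := norm_add_le _ _
              _ ≤ ‖z₀‖ + 1 := by linarith
          linarith
        rw [norm_mul, norm_mul]
        have h1 : ‖Complex.exp (Complex.I * z * r)‖ ≤ Real.exp ((‖z₀‖ + 1 + 1) * R) := by
          refine le_trans (hexp_bound z r hrR) (Real.exp_le_exp.2 ?_)
          exact mul_le_mul_of_nonneg_right hz1 (le_of_lt hRpos)
        have h2 : ‖Complex.I * (r:ℂ)‖ ≤ R := by
          rw [norm_mul, Complex.norm_I, one_mul, Complex.norm_real, Real.norm_eq_abs]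
          exact hrR
        calc ‖Complex.exp (Complex.I * z * r)‖ * ‖Complex.I * (r:ℂ)‖ * ‖F r‖
            ≤ Real.exp ((‖z₀‖ + 1 + 1) * R) * R * ‖F r‖ := by
              apply mul_le_mul_of_nonneg_right _ (norm_nonneg _)
              exact mul_le_mul h1 h2 (norm_nonneg _) (Real.exp_nonneg _)
          _ = R * Real.exp ((‖z₀‖ + 1 + 1) * R) * ‖F r‖ := by ring
    have hdiff : ∀ᵐ r : ℝ ∂volume, ∀ z ∈ Metric.ball z₀ 1,
        HasDerivAt (fun z : ℂ => Complex.exp (Complex.I * z * r) * F r)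
          (Complex.exp (Complex.I * z * r) * (Complex.I * r) * F r) z := by
      filter_upwards with r
      intro z hz
      have h1 : HasDerivAt (fun z : ℂ => Complex.I * z * (r:ℂ)) (Complex.I * r) z := by
        simpa using ((hasDerivAt_id z).const_mul Complex.I).mul_const (r:ℂ)
      exact (h1.cexp).mul_const (F r)
    have key := hasDerivAt_integral_of_dominated_loc_of_deriv_le (Metric.ball_mem_nhds z₀ one_pos)
      (Filter.Eventually.of_forall fun z => hKm z) (hKint z₀) hmeas' hbound
      ((hFint.norm).const_mul _) hdiff
    exact DifferentiableAt.const_mul (key.2.differentiableAt) _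
  set τ : ℝ → ℂ := fun s : ℝ => T ((s:ℝ) : ℂ) with hτdef
  have hτc : ContDiff ℝ (⊤ : ℕ∞) τ := by
    refine ContDiff.of_le (n := (⊤ : WithTop ℕ∞)) ?_ le_top
    rw [contDiff_omega_iff_analyticOnNhd]
    intro s _
    have h1 : AnalyticAt ℝ T ((Complex.ofRealCLM : ℝ →L[ℝ] ℂ) s) :=
      (hTdiff.analyticAt _).restrictScalars
    exact h1.comp (Complex.ofRealCLM.analyticAt s)
  have hτeq : ∀ s : ℝ, τ s
      = (2 * (π:ℂ))⁻¹ * ∫ r : ℝ, Complex.exp (Complex.I * s * r) * F r := fun s => rfl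
  have hρint : ∀ s : ℝ, (∫ r : ℝ, Complex.exp (Complex.I * s * r) * g r) = 2 * π * ρ s := by
    intro s
    rw [← integral_exp_fhat ρ s]
    congr 1
    funext x
    rw [show Complex.I * (s:ℂ) * (x:ℂ) = Complex.I * (x:ℂ) * (s:ℂ) from by ring]
  have hae0 : ∀ᵐ r : ℝ, r ≠ (0:ℝ) := by
    rw [MeasureTheory.ae_iff]
    have h : {a : ℝ | ¬a ≠ 0} = {(0:ℝ)} := by ext a; simp
    rw [h]
    exact measure_singleton 0
  have hkey : ∀ s : ℝ, s ≠ 0 →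
      (∫ r : ℝ, Complex.exp (Complex.I * s * r) * F r)
        = 2 * π * (1 - ρ s) / (Complex.I * s) := by
    intro s hs
    have hc : (Complex.I * (s:ℂ)) ≠ 0 :=
      mul_ne_zero Complex.I_ne_zero (Complex.ofReal_ne_zero.mpr hs)
    set e : ℝ → ℂ := fun r : ℝ => Complex.exp (Complex.I * s * r) with he
    have hecont : Continuous e :=
      Complex.continuous_exp.comp (continuous_const.mul Complex.continuous_ofReal)
    have heF : Integrable (fun r => e r * F r) := hKint ((s:ℝ) : ℂ)
    have he0 : e 0 = 1 := by
      simp only [he, Complex.ofReal_zero, mul_zero, Complex.exp_zero]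
    have hv : ∀ r : ℝ, HasDerivAt (fun r : ℝ => (Complex.I * s)⁻¹ * e r) (e r) r := by
      intro r
      have h0 : HasDerivAt (fun w : ℂ => Complex.I * (s:ℂ) * w) (Complex.I * s) ((r:ℝ):ℂ) := by
        simpa using (hasDerivAt_id ((r:ℝ):ℂ)).const_mul (Complex.I * (s:ℂ))
      have h1 : HasDerivAt (fun y : ℝ => Complex.I * (s:ℂ) * (y:ℂ)) (Complex.I * s) r :=
        h0.comp_ofReal
      have h2 : HasDerivAt e (Complex.exp (Complex.I * s * r) * (Complex.I * s)) r := h1.cexp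
      have h3 := h2.const_mul ((Complex.I * s)⁻¹)
      refine h3.congr_deriv ?_
      rw [he]
      field_simp [Complex.ofReal_ne_zero.mpr hs]
    have hsplit := (intervalIntegral.integral_Iic_add_Ioi (b := (0:ℝ))
      (heF.integrableOn) (heF.integrableOn)).symm
    have hB1 : (∫ r in Set.Iic (0:ℝ), e r * F r) = ∫ r in Set.Iic (0:ℝ), G r * e r := by
      apply setIntegral_congr_ae measurableSet_Iic
      filter_upwards [hae0] with r hr hmem
      have hr' : ¬ (0:ℝ) ≤ r := by
        rcases lt_or_ge r 0 with h | h
        · exact not_le.mpr h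
        · exact absurd (le_antisymm hmem h) hr
      simp only [hFdef, if_neg hr', mul_zero, sub_zero]
      ring
    have hB2 : IntegrableOn (fun r => G r * e r) (Set.Iic (0:ℝ)) := by
      apply (heF.integrableOn (s := Set.Iic (0:ℝ))).congr
      filter_upwards [ae_restrict_mem measurableSet_Iic, ae_restrict_of_ae hae0] with r hmem hr
      have hr' : ¬ (0:ℝ) ≤ r := by
        rcases lt_or_ge r 0 with h | h
        · exact not_le.mpr h
        · exact absurd (le_antisymm hmem h) hr
      simp only [hFdef, if_neg hr', mul_zero, sub_zero]
      ring
    have hB3 : (∫ r in Set.Iic (0:ℝ), G r * e r) = ∫ x in (-R)..(0:ℝ), G x * e x := by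
      have h4 := intervalIntegral.integral_Iic_sub_Iic
        (hB2.mono_set (Set.Iic_subset_Iic.mpr (by linarith : -R ≤ (0:ℝ)))) hB2
      have h5 : (∫ r in Set.Iic (-R), G r * e r) = 0 := by
        apply setIntegral_eq_zero_of_forall_eq_zero
        intro x hx
        rw [hGL x hx, zero_mul]
      rw [← h4, h5, sub_zero]
    have hC1 : (∫ r in Set.Ioi (0:ℝ), e r * F r)
        = ∫ r in Set.Ioi (0:ℝ), (G r - 2 * (π:ℂ)) * e r := by
      apply setIntegral_congr_fun measurableSet_Ioi
      intro r hr
      simp only [hFdef, if_pos (le_of_lt (Set.mem_Ioi.mp hr)), mul_one]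
      ring
    have hC2 : IntegrableOn (fun r => (G r - 2 * (π:ℂ)) * e r) (Set.Ioi (0:ℝ)) := by
      apply (heF.integrableOn (s := Set.Ioi (0:ℝ))).congr
      filter_upwards [ae_restrict_mem measurableSet_Ioi] with r hmem
      simp only [hFdef, if_pos (le_of_lt (Set.mem_Ioi.mp hmem)), mul_one]
      ring
    have hC4 : (∫ r in Set.Ioi (0:ℝ), (G r - 2 * (π:ℂ)) * e r)
        = (∫ r in Set.Ioc (0:ℝ) R, (G r - 2 * (π:ℂ)) * e r)
          + ∫ r in Set.Ioi R, (G r - 2 * (π:ℂ)) * e r := by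
      rw [← setIntegral_union (Set.Ioc_disjoint_Ioi le_rfl) measurableSet_Ioi
        (hC2.mono_set (by
          rw [← Set.Ioc_union_Ioi_eq_Ioi (le_of_lt hRpos)]
          exact Set.subset_union_left))
        (hC2.mono_set (by
          rw [← Set.Ioc_union_Ioi_eq_Ioi (le_of_lt hRpos)]
          exact Set.subset_union_right)),
        Set.Ioc_union_Ioi_eq_Ioi (le_of_lt hRpos)]
    have hC5 : (∫ r in Set.Ioi R, (G r - 2 * (π:ℂ)) * e r) = 0 := by
      apply setIntegral_eq_zero_of_forall_eq_zero
      intro x hx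
      rw [hGR x (le_of_lt hx), sub_self, zero_mul]
    have hC6 : (∫ r in Set.Ioc (0:ℝ) R, (G r - 2 * (π:ℂ)) * e r)
        = ∫ x in (0:ℝ)..R, (G x - 2 * (π:ℂ)) * e x :=
      (intervalIntegral.integral_of_le (le_of_lt hRpos)).symm
    have hparts1 := intervalIntegral.integral_mul_deriv_eq_deriv_mul
      (u := G) (v := fun r : ℝ => (Complex.I * s)⁻¹ * e r) (u' := g) (v' := e)
      (a := -R) (b := 0)
      (fun x _ => hGderiv x) (fun x _ => hv x)
      (hgcont.intervalIntegrable _ _) (hecont.intervalIntegrable _ _)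
    have hparts2 := intervalIntegral.integral_mul_deriv_eq_deriv_mul
      (u := fun r => G r - 2 * (π:ℂ)) (v := fun r : ℝ => (Complex.I * s)⁻¹ * e r)
      (u' := g) (v' := e) (a := 0) (b := R)
      (fun x _ => (hGderiv x).sub_const _) (fun x _ => hv x)
      (hgcont.intervalIntegrable _ _) (hecont.intervalIntegrable _ _)
    have hadj : (∫ x in (-R)..(0:ℝ), g x * ((Complex.I * s)⁻¹ * e x))
        + (∫ x in (0:ℝ)..R, g x * ((Complex.I * s)⁻¹ * e x))
        = ∫ x in (-R)..R, g x * ((Complex.I * s)⁻¹ * e x) := by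
      apply intervalIntegral.integral_add_adjacent_intervals
      · exact (hgcont.mul (continuous_const.mul hecont)).intervalIntegrable _ _
      · exact (hgcont.mul (continuous_const.mul hecont)).intervalIntegrable _ _
    have hge : (∫ x in (-R)..R, g x * ((Complex.I * s)⁻¹ * e x))
        = (Complex.I * s)⁻¹ * (2 * π * ρ s) := by
      have h7 : ∀ x : ℝ, g x * ((Complex.I * s)⁻¹ * e x)
          = (Complex.I * s)⁻¹ * (e x * g x) := fun x => by ring
      simp_rw [h7]
      rw [intervalIntegral.integral_const_mul]
      congr 1
      have h8 : (∫ x in (-R)..R, e x * g x) = ∫ r : ℝ, e r * g r := by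
        rw [intervalIntegral.integral_of_le (by linarith : -R ≤ R)]
        apply setIntegral_eq_integral_of_forall_compl_eq_zero
        intro x hx
        simp only [Set.mem_Ioc, not_and_or, not_lt, not_le] at hx
        have hgx : g x = 0 := by
          apply hg0
          rcases hx with h | h
          · rw [abs_of_nonpos (by linarith)]; linarith
          · rw [abs_of_pos (lt_trans hRpos h)]; linarith
        rw [hgx, mul_zero]
      rw [h8]
      exact hρint s
    rw [hsplit, hB1, hB3, hC1, hC4, hC5, hC6, add_zero, hparts1, hparts2]
    beta_reduce
    rw [hGL (-R) le_rfl, hGR R le_rfl, he0]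
    linear_combination -(hadj.trans hge)
  have hτs : ∀ s : ℝ, s ≠ 0 → τ s = (1 - ρ s) / (Complex.I * s) := by
    intro s hs
    have hc : (Complex.I * (s:ℂ)) ≠ 0 :=
      mul_ne_zero Complex.I_ne_zero (Complex.ofReal_ne_zero.mpr hs)
    rw [hτeq s, hkey s hs]
    field_simp
  have hfinal : ∀ φ : SchwartzMap ℝ ℂ,
      (∫ s : ℝ, τ s * fhat (fun u => φ u) s) = ∫ r : ℝ, F r * φ r := by
    intro φ
    have hψcont : Continuous (fhat (fun u => φ u)) := fhat_schwartz_continuous φ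
    have hψint : Integrable (fhat (fun u => φ u)) := fhat_schwartz_integrable φ
    have hprod : Integrable (Function.uncurry fun (s r : ℝ) =>
        Complex.exp (Complex.I * s * r) * F r * fhat (fun u => φ u) s)
        (volume.prod volume) := by
      have hb : Integrable (fun p : ℝ × ℝ => fhat (fun u => φ u) p.1 * F p.2)
          (volume.prod volume) := hψint.mul_prod hFint
      refine hb.norm.mono' ?_ ?_
      · refine AEStronglyMeasurable.mul (AEStronglyMeasurable.mul ?_ ?_) ?_
        · refine Continuous.aestronglyMeasurable ?_
          apply Complex.continuous_exp.comp
          exact (continuous_const.mul (Complex.continuous_ofReal.comp continuous_fst)).mul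
            (Complex.continuous_ofReal.comp continuous_snd)
        · exact (hFm.comp measurable_snd).aestronglyMeasurable
        · exact (hψcont.comp continuous_fst).aestronglyMeasurable
      · filter_upwards with p
        have h1 : ‖Function.uncurry (fun (s r : ℝ) =>
            Complex.exp (Complex.I * s * r) * F r * fhat (fun u => φ u) s) p‖
            = ‖F p.2‖ * ‖fhat (fun u => φ u) p.1‖ := by
          rw [Function.uncurry]
          rw [norm_mul, norm_mul, hexp_one p.1 p.2, one_mul]
        rw [h1, norm_mul]
        exact le_of_eq (mul_comm _ _)
    calc (∫ s : ℝ, τ s * fhat (fun u => φ u) s)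
        = ∫ s : ℝ, (2 * (π:ℂ))⁻¹
            * ∫ r : ℝ, Complex.exp (Complex.I * s * r) * F r * fhat (fun u => φ u) s := by
          congr 1
          funext s
          rw [hτeq s, mul_assoc]
          congr 1
          exact (integral_mul_const _ _).symm
      _ = (2 * (π:ℂ))⁻¹ * ∫ s : ℝ,
            ∫ r : ℝ, Complex.exp (Complex.I * s * r) * F r * fhat (fun u => φ u) s :=
          integral_const_mul _ _
      _ = (2 * (π:ℂ))⁻¹ * ∫ r : ℝ,
            ∫ s : ℝ, Complex.exp (Complex.I * s * r) * F r * fhat (fun u => φ u) s := by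
          rw [MeasureTheory.integral_integral_swap hprod]
      _ = (2 * (π:ℂ))⁻¹ * ∫ r : ℝ,
            (∫ s : ℝ, Complex.exp (Complex.I * s * r) * fhat (fun u => φ u) s) * F r := by
          congr 1
          apply integral_congr_ae
          filter_upwards with r
          have h9 : ∀ s : ℝ, Complex.exp (Complex.I * s * r) * F r * fhat (fun u => φ u) s
              = (Complex.exp (Complex.I * s * r) * fhat (fun u => φ u) s) * F r :=
            fun s => by ring
          simp_rw [h9]
          exact integral_mul_const _ _
      _ = (2 * (π:ℂ))⁻¹ * ∫ r : ℝ, (2 * (π:ℂ) * φ r) * F r := by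
          congr 1
          apply integral_congr_ae
          filter_upwards with r
          rw [integral_exp_fhat φ r]
      _ = ∫ r : ℝ, F r * φ r := by
          rw [← integral_const_mul]
          apply integral_congr_ae
          filter_upwards with r
          rw [show (2 * (π:ℂ))⁻¹ * (2 * (π:ℂ) * φ r * F r) = (2 * (π:ℂ))⁻¹ * (2 * (π:ℂ)) * (F r * φ r) from by ring,
            inv_mul_cancel₀ h2πc, one_mul]
  exact ⟨τ, hτc, hτs, hFcpt, ⟨M, fun r => hFbd r⟩, fun φ => hfinal φ⟩

end
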